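/- arXiv:1407.2167 — 2 statements merged into one kernel-verified Lean document; each statement's English description precedes it below -/
import Mathlib

section
/- With notation as in the paper: let α₁,…,α_m be the positive noncompact roots, δ_K the half-sum of positive compact roots, I₋ = {i : ⟨δ_K,α_i⟩ < 0}, I₀ = {i : ⟨δ_K,α_i⟩ = 0}. Suppose for a subset I ⊆ I₀ there is w_I in the Weyl group W_G with w_I·δ_G − δ_K = δ_p − ∑_{i∈I₋}α_i − ∑_{i∈I}α_i =: β_I. Then ‖β_I‖² = ‖δ_p‖² + 2∑_{i∈I₋}⟨α_i, δ_K⟩. In particular all the β_I with I ⊆ I₀ have the same norm. -/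
open scoped RealInnerProductSpace

/-- Norm computation for the highest weights β_I, I ⊆ I₀. -/
theorem stmt2 {V : Type*} [NormedAddCommGroup V] [InnerProductSpace ℝ V] {m : ℕ}
    (α : Fin m → V) (δG δK δp : V) (hδp : δp = δG - δK)
    (Iminus I0 : Finset (Fin m))
    (hIm : Iminus = Finset.univ.filter fun i => ⟪δK, α i⟫ < 0)
    (hI0 : I0 = Finset.univ.filter fun i => ⟪δK, α i⟫ = 0)
    (I : Finset (Fin m)) (hI : I ⊆ I0)
    (wI : V ≃ₗᵢ[ℝ] V)
    (hw : wI δG - δK = δp - ∑ i ∈ Iminus, α i - ∑ i ∈ I, α i) :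
    ‖δp - ∑ i ∈ Iminus, α i - ∑ i ∈ I, α i‖^2
      = ‖δp‖^2 + 2 * ∑ i ∈ Iminus, ⟪α i, δK⟫ := by
  set S := ∑ i ∈ Iminus, α i with hS
  set T := ∑ i ∈ I, α i with hTdef
  have hT : ⟪δK, T⟫ = 0 := by
    rw [hTdef, inner_sum]
    refine Finset.sum_eq_zero fun i hi => ?_
    have h := hI hi
    rw [hI0, Finset.mem_filter] at h
    exact h.2
  have hsum : ∑ i ∈ Iminus, ⟪α i, δK⟫ = ⟪S, δK⟫ := by
    rw [hS, sum_inner]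
  have hw2 : wI δG = (δp - S - T) + δK := by
    rw [← hw]; abel
  have hiso : ⟪wI δG, wI δG⟫ = ⟪δG, δG⟫ := wI.inner_map_map δG δG
  rw [hw2] at hiso
  have hGd : δG = δp + δK := by rw [hδp]; abel
  rw [hGd] at hiso
  rw [hsum, ← real_inner_self_eq_norm_sq, ← real_inner_self_eq_norm_sq]
  simp only [inner_sub_left, inner_sub_right, inner_add_left, inner_add_right] at hiso ⊢
  have c1 : ⟪δK, S⟫ = ⟪S, δK⟫ := real_inner_comm _ _
  have c2 : ⟪δK, δp⟫ = ⟪δp, δK⟫ := real_inner_comm _ _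
  have c3 : ⟪T, δK⟫ = ⟪δK, T⟫ := real_inner_comm _ _
  linarith [hiso]
end

section
/- Let Φ_K⁺ be the positive roots of K with half-sum δ_K, α₁,…,α_m the positive noncompact roots, I₋ = {i : ⟨δ_K,α_i⟩ < 0}, I₀ = {i : ⟨δ_K,α_i⟩ = 0}, and for I ⊆ I₀ set β_I = δ_p − ∑_{i∈I₋}α_i − ∑_{i∈I}α_i. Then there is no positive compact root θ and subset J ⊆ {1,…,m} such that β_I + θ = δ_p − ∑_{i∈J}α_i. (This is the key step showing β_I is a highest weight of the spin representation of K.) -/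
open scoped RealInnerProductSpace

/-- β_I cannot be raised by a positive compact root: there is no positive compact
root θ and subset J with β_I + θ = δ_p − ∑_{i∈J} α_i. -/
theorem stmt3 {V : Type*} [NormedAddCommGroup V] [InnerProductSpace ℝ V] {m : ℕ}
    (α : Fin m → V) (δK δp : V)
    (hδp : δp = (2:ℝ)⁻¹ • ∑ i, α i)
    (ΦK : Finset V) (hθpos : ∀ θ ∈ ΦK, 0 < ⟪θ, δK⟫)
    (Iminus I0 : Finset (Fin m))
    (hIm : Iminus = Finset.univ.filter fun i => ⟪δK, α i⟫ < 0)
    (hI0 : I0 = Finset.univ.filter fun i => ⟪δK, α i⟫ = 0)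
    (I : Finset (Fin m)) (hI : I ⊆ I0) :
    ¬ ∃ θ ∈ ΦK, ∃ J : Finset (Fin m),
      (δp - ∑ i ∈ Iminus, α i - ∑ i ∈ I, α i) + θ = δp - ∑ i ∈ J, α i := by
  rintro ⟨θ, hθ, J, hJ⟩
  have hpos : 0 < ⟪δK, θ⟫ := by
    have := hθpos θ hθ; rwa [real_inner_comm] at this
  have hθeq : θ = (∑ i ∈ Iminus, α i + ∑ i ∈ I, α i) - ∑ i ∈ J, α i := by
    calc θ = (δp - ∑ i ∈ J, α i) - (δp - ∑ i ∈ Iminus, α i - ∑ i ∈ I, α i) := by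
            rw [← hJ]; abel
      _ = _ := by abel
  have key : ⟪δK, θ⟫ = (∑ i ∈ Iminus, ⟪δK, α i⟫ + ∑ i ∈ I, ⟪δK, α i⟫)
      - ∑ i ∈ J, ⟪δK, α i⟫ := by
    rw [hθeq, inner_sub_right, inner_add_right, inner_sum, inner_sum, inner_sum]
  have hI0sum : ∑ i ∈ I, ⟪δK, α i⟫ = 0 := by
    refine Finset.sum_eq_zero fun i hi => ?_
    have := hI hi
    rw [hI0, Finset.mem_filter] at this
    exact this.2
  set f : Fin m → ℝ := fun i => ⟪δK, α i⟫ with hf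
  set Jneg : Finset (Fin m) := J.filter (fun i => f i < 0) with hJneg
  have hsub : Jneg ⊆ Iminus := by
    intro i hi
    rw [hJneg, Finset.mem_filter] at hi
    rw [hIm, Finset.mem_filter]
    exact ⟨Finset.mem_univ i, hi.2⟩
  have h1 : ∑ i ∈ Iminus, f i ≤ ∑ i ∈ Jneg, f i := by
    have hsplit : ∑ i ∈ Iminus, f i = ∑ i ∈ Jneg, f i + ∑ i ∈ Iminus \ Jneg, f i := by
      rw [add_comm, Finset.sum_sdiff hsub]
    have hnp : ∑ i ∈ Iminus \ Jneg, f i ≤ 0 := by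
      refine Finset.sum_nonpos fun i hi => ?_
      have := (Finset.mem_sdiff.mp hi).1
      rw [hIm, Finset.mem_filter] at this
      exact le_of_lt this.2
    linarith
  have h2 : ∑ i ∈ Jneg, f i ≤ ∑ i ∈ J, f i := by
    have hsplit : ∑ i ∈ J, f i
        = ∑ i ∈ Jneg, f i + ∑ i ∈ J.filter (fun i => ¬ f i < 0), f i := by
      rw [hJneg, Finset.sum_filter_add_sum_filter_not]
    have hnn : 0 ≤ ∑ i ∈ J.filter (fun i => ¬ f i < 0), f i := by
      refine Finset.sum_nonneg fun i hi => ?_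
      have := (Finset.mem_filter.mp hi).2
      linarith [not_lt.mp this]
    linarith
  have : ⟪δK, θ⟫ ≤ 0 := by
    rw [key, hI0sum]
    have : ∑ i ∈ Iminus, f i ≤ ∑ i ∈ J, f i := le_trans h1 h2
    simpa [hf] using by linarith
  linarith
end
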